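/- Let k ≥ 1, α ∈ (0,1]^k, ρ ∈ (0,1]^k with Σ_i ρ_i = 1, and set σ = Σ_{i=1}^k α_i ρ_i. Then inf over ω ∈ ℝ_+^k of inf over τ > 0 of [ σ + Σ_{i=1}^k ρ_i( α_i (ω_i τ)² + (1 − α_i) φ(ω_i τ) ) ] equals Σ_{i=1}^k ρ_i · inf over τ ≥ 0 of [ α_i (1 + τ²) + (1 − α_i) φ(τ) ], where φ(t) = √(2/π) ∫_t^∞ (x − t)² exp(−x²/2) dx. (That is, the optimally weighted recovery threshold decouples into the sum, weighted by ρ_i, of the standard thresholds for sparsity fraction α_i.) -/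

import Mathlib

open MeasureTheory ProbabilityTheory
open scoped Pointwise BigOperators

noncomputable section

/-- `phi t = sqrt(2/pi) * int_t^infty (x-t)^2 exp(-x^2/2) dx`. -/
def phi (t : ℝ) : ℝ :=
  Real.sqrt (2 / Real.pi) * ∫ x in Set.Ioi t, (x - t) ^ 2 * Real.exp (-x ^ 2 / 2)

/-!
The objective is separable: since `σ = ∑ ρᵢ αᵢ`, it equals `∑ ρᵢ ψ_{αᵢ}(ωᵢ τ)` with
`ψ_α(t) = α (1 + t²) + (1 - α) φ(t)`. As `(ω, τ)` ranges over `ℝ₊ᵏ × (0, ∞)`, the products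
`ωᵢ τ` range over all of `ℝ₊ᵏ`, and the infimum of a separable sum of functions bounded below
is the sum of the infima.
-/

def thresholdFun (α t : ℝ) : ℝ :=
  α * (1 + t ^ 2) + (1 - α) * phi t

theorem phi_nonneg (t : ℝ) : 0 ≤ phi t :=
  mul_nonneg (Real.sqrt_nonneg _)
    (integral_nonneg fun _ => mul_nonneg (sq_nonneg _) (Real.exp_pos _).le)

theorem thresholdFun_nonneg {α : ℝ} (h₀ : 0 ≤ α) (h₁ : α ≤ 1) (t : ℝ) : 0 ≤ thresholdFun α t :=
  add_nonneg (mul_nonneg h₀ (by positivity)) (mul_nonneg (sub_nonneg.2 h₁) (phi_nonneg t))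

theorem add_sum_eq_sum_thresholdFun {ι : Type*} [Fintype ι] (α ρ t : ι → ℝ) :
    ∑ i, α i * ρ i + ∑ i, ρ i * (α i * t i ^ 2 + (1 - α i) * phi (t i)) =
      ∑ i, ρ i * thresholdFun (α i) (t i) := by
  rw [← Finset.sum_add_distrib]
  exact Finset.sum_congr rfl fun i _ => by unfold thresholdFun; ring

theorem ciInf_pi_sum_eq_sum_ciInf {ι : Type*} [Fintype ι] {κ : ι → Type*} [∀ i, Nonempty (κ i)]
    (g : ∀ i, κ i → ℝ) (hg : ∀ i, BddBelow (Set.range (g i))) :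
    ⨅ x : ∀ i, κ i, ∑ i, g i (x i) = ∑ i, ⨅ y, g i y := by
  refine le_antisymm (le_of_forall_pos_lt_add fun ε hε => ?_)
    (le_ciInf fun x => Finset.sum_le_sum fun i _ => ciInf_le (hg i) (x i))
  set δ := ε / (Fintype.card ι + 1)
  have hδ : Fintype.card ι * δ < ε := by
    rw [mul_div_assoc', div_lt_iff₀ (by positivity)]
    linarith
  choose x hx using fun i => exists_lt_of_ciInf_lt (lt_add_of_pos_right (⨅ y, g i y)
    (show 0 < δ by positivity))
  have hbdd : BddBelow (Set.range fun x : ∀ i, κ i => ∑ i, g i (x i)) :=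
    ⟨∑ i, ⨅ y, g i y, by
      rintro _ ⟨x, rfl⟩
      exact Finset.sum_le_sum fun i _ => ciInf_le (hg i) (x i)⟩
  calc ⨅ x : ∀ i, κ i, ∑ i, g i (x i)
      ≤ ∑ i, g i (x i) := ciInf_le hbdd x
    _ ≤ ∑ i, ((⨅ y, g i y) + δ) := Finset.sum_le_sum fun i _ => (hx i).le
    _ = (∑ i, ⨅ y, g i y) + Fintype.card ι * δ := by
      rw [Finset.sum_add_distrib, Finset.sum_const, nsmul_eq_mul, Finset.card_univ]
    _ < (∑ i, ⨅ y, g i y) + ε := by linarith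

theorem ciInf_ciInf_pos_smul_eq_ciInf {E : Type*} [MulAction ℝ E] {p : E → Prop}
    [Nonempty {x // p x}]
    (hp : ∀ x, p x → ∀ t : ℝ, 0 < t → p (t • x)) (F : E → ℝ)
    (hF : BddBelow (Set.range fun x : {x // p x} => F x)) :
    ⨅ x : {x // p x}, ⨅ t : {t : ℝ // 0 < t}, F ((t : ℝ) • (x : E)) = ⨅ x : {x // p x}, F x := by
  obtain ⟨b, hb⟩ := hF
  have hscaled : ∀ (x : {x // p x}) (t : {t : ℝ // 0 < t}), b ≤ F ((t : ℝ) • (x : E)) :=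
    fun x t => hb ⟨⟨_, hp _ x.2 _ t.2⟩, rfl⟩
  have hinner : ∀ x : {x // p x},
      BddBelow (Set.range fun t : {t : ℝ // 0 < t} => F ((t : ℝ) • (x : E))) :=
    fun x => ⟨b, by rintro _ ⟨t, rfl⟩; exact hscaled x t⟩
  refine le_antisymm (ciInf_mono ⟨b, ?_⟩ fun x => ?_)
    (le_ciInf fun x => le_ciInf fun t => ciInf_le ⟨b, hb⟩ ⟨_, hp _ x.2 _ t.2⟩)
  · rintro _ ⟨x, rfl⟩
    exact le_ciInf (hscaled x)
  · simpa using ciInf_le (hinner x) ⟨1, one_pos⟩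

theorem optimal_threshold_decouples_general {k : ℕ}
    (α ρ : Fin k → ℝ)
    (hα : ∀ i, 0 < α i ∧ α i ≤ 1) (hρ : ∀ i, 0 < ρ i ∧ ρ i ≤ 1)
    (σ : ℝ) (hσ : σ = ∑ i, α i * ρ i) :
    (⨅ ω : {ω : Fin k → ℝ // ∀ i, 0 ≤ ω i}, ⨅ τ : {t : ℝ // 0 < t},
        (σ + ∑ i, ρ i * (α i * ((ω : Fin k → ℝ) i * (τ : ℝ)) ^ 2
          + (1 - α i) * phi ((ω : Fin k → ℝ) i * (τ : ℝ)))))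
      = ∑ i, ρ i * ⨅ τ : {t : ℝ // 0 ≤ t},
          (α i * (1 + (τ : ℝ) ^ 2) + (1 - α i) * phi (τ : ℝ)) := by
  have hterm_nonneg : ∀ i t, 0 ≤ ρ i * thresholdFun (α i) t := fun i t =>
    mul_nonneg (hρ i).1.le (thresholdFun_nonneg (hα i).1.le (hα i).2 t)
  have hbdd : ∀ i, BddBelow (Set.range fun t : {t : ℝ // 0 ≤ t} => ρ i * thresholdFun (α i) t) :=
    fun i => ⟨0, by rintro _ ⟨t, rfl⟩; exact hterm_nonneg i t⟩
  have hne : Nonempty {ω : Fin k → ℝ // ∀ i, 0 ≤ ω i} := ⟨⟨0, fun _ => le_rfl⟩⟩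
  calc _ = ⨅ ω : {ω : Fin k → ℝ // ∀ i, 0 ≤ ω i}, ⨅ τ : {t : ℝ // 0 < t},
          ∑ i, ρ i * thresholdFun (α i) (((τ : ℝ) • (ω : Fin k → ℝ)) i) := by
        simp only [hσ, add_sum_eq_sum_thresholdFun, Pi.smul_apply, smul_eq_mul, mul_comm]
    _ = ⨅ ω : {ω : Fin k → ℝ // ∀ i, 0 ≤ ω i},
          ∑ i, ρ i * thresholdFun (α i) ((ω : Fin k → ℝ) i) :=
        ciInf_ciInf_pos_smul_eq_ciInf (p := fun ω : Fin k → ℝ => ∀ i, 0 ≤ ω i)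
          (fun ω hω τ hτ i => mul_nonneg hτ.le (hω i))
          (fun ω => ∑ i, ρ i * thresholdFun (α i) (ω i))
          ⟨0, by rintro _ ⟨ω, rfl⟩; exact Finset.sum_nonneg fun i _ => hterm_nonneg i _⟩
    _ = ⨅ t : Fin k → {t : ℝ // 0 ≤ t}, ∑ i, ρ i * thresholdFun (α i) (t i) :=
        Equiv.iInf_congr Equiv.subtypePiEquivPi fun _ => rfl
    _ = ∑ i, ⨅ t : {t : ℝ // 0 ≤ t}, ρ i * thresholdFun (α i) t := ciInf_pi_sum_eq_sum_ciInf _ hbdd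
    _ = _ := by simp only [Real.mul_iInf_of_nonneg (hρ _).1.le, thresholdFun]

theorem optimal_threshold_decouples {k : ℕ} (hk : 0 < k)
    (α ρ : Fin k → ℝ)
    (hα : ∀ i, 0 < α i ∧ α i ≤ 1) (hρ : ∀ i, 0 < ρ i ∧ ρ i ≤ 1)
    (hsum : ∑ i, ρ i = 1) (σ : ℝ) (hσ : σ = ∑ i, α i * ρ i) :
    (⨅ ω : {ω : Fin k → ℝ // ∀ i, 0 ≤ ω i}, ⨅ τ : {t : ℝ // 0 < t},
        (σ + ∑ i, ρ i * (α i * ((ω : Fin k → ℝ) i * (τ : ℝ)) ^ 2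
          + (1 - α i) * phi ((ω : Fin k → ℝ) i * (τ : ℝ)))))
      = ∑ i, ρ i * ⨅ τ : {t : ℝ // 0 ≤ t},
          (α i * (1 + (τ : ℝ) ^ 2) + (1 - α i) * phi (τ : ℝ)) :=
  optimal_threshold_decouples_general α ρ hα hρ σ hσ

end
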